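/- With the Latin-square rejection region R† ⊂ ℝ³ of order α⁻¹ as above, the test rejecting when (|Z₁|, |Z₂|, |Z₃|) ∈ R† is a similar test of H₀ : δ₁δ₂δ₃ = 0 at level α: for every (δ₁, δ₂, δ₃) with δ₁δ₂δ₃ = 0, P((|Z₁|, |Z₂|, |Z₃|) ∈ R†) = α, where (Z₁, Z₂, Z₃) ~ N((δ₁, δ₂, δ₃), I₃). -/

import Mathlib

open MeasureTheory ProbabilityTheory Set Filter Pointwise
open scoped ENNReal NNReal

/-- The standard normal cumulative distribution function Φ. -/
noncomputable def stdPhi (x : ℝ) : ℝ := ((gaussianReal 0 1) (Set.Iic x)).toReal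

/-- The inverse Φ⁻¹ of the standard normal CDF. -/
noncomputable def stdPhiInv : ℝ → ℝ := Function.invFun stdPhi

/-- A Latin square of order n: each symbol occurs exactly once in each row and column. -/
def IsLatinSquare {n : ℕ} (A : Fin n → Fin n → Fin n) : Prop :=
  (∀ i, Function.Bijective (A i)) ∧ (∀ j, Function.Bijective fun i => A i j)

/-- The law of (Z₁, Z₂, Z₃) ~ N((d₁, d₂, d₃), I₃). -/
noncomputable def gauss3 (d1 d2 d3 : ℝ) : Measure (ℝ × ℝ × ℝ) :=
  (gaussianReal d1 1).prod ((gaussianReal d2 1).prod (gaussianReal d3 1))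

/-- c_k = Φ⁻¹((1 + kα)/2) with α = 1/n; c_0 = 0 and c_n = ∞. -/
noncomputable def cseq (n k : ℕ) : ℝ := stdPhiInv ((1 + (k : ℝ) / n) / 2)

/-- The interval (c_{k-1}, c_k), with c_n = ∞. -/
noncomputable def cband (n k : ℕ) : Set ℝ :=
  if k = n then Set.Ioi (cseq n (n - 1)) else Set.Ioo (cseq n (k - 1)) (cseq n k)

/-- The Latin-square rejection region
R† = ⋃_{i,j} (c_{i−1}, c_i) × (c_{j−1}, c_j) × (c_{A(i,j)−1}, c_{A(i,j)}) ⊂ ℝ³. -/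
noncomputable def Rdag (n : ℕ) (A : Fin n → Fin n → Fin n) : Set (ℝ × ℝ × ℝ) :=
  ⋃ i : Fin n, ⋃ j : Fin n,
    (cband n (i.1 + 1)) ×ˢ (cband n (j.1 + 1)) ×ˢ (cband n ((A i j).1 + 1))

instance gauss_noAtoms (d : ℝ) : NullSingletonClass (gaussianReal d 1) := by
  constructor
  intro x
  exact gaussianReal_absolutelyContinuous d (v := 1) one_ne_zero (measure_singleton x)


lemma gauss_ne_top (d : ℝ) (s : Set ℝ) : gaussianReal d 1 s ≠ ⊤ := measure_ne_top _ _

lemma stdPhi_eq_cdf (x : ℝ) : stdPhi x = cdf (gaussianReal 0 1) x := ((cdf_eq_real _ x).trans (measureReal_def _ _)).symm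

lemma gaussianPDF_le_one (d : ℝ) (x : ℝ) : gaussianPDF d 1 x ≤ 1 := by
  rw [gaussianPDF]
  rw [show (1 : ℝ≥0∞) = ENNReal.ofReal 1 by simp]
  apply ENNReal.ofReal_le_ofReal
  rw [gaussianPDFReal]
  have h1 : Real.exp (-(x - d) ^ 2 / (2 * (1:NNReal))) ≤ 1 := by
    rw [Real.exp_le_one_iff]
    have : (0:ℝ) ≤ (x - d)^2 := sq_nonneg _
    push_cast
    nlinarith
  have h2 : (Real.sqrt (2 * Real.pi * (1:NNReal)))⁻¹ ≤ 1 := by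
    rw [inv_le_one_iff₀]
    right
    push_cast
    rw [mul_one, show (1:ℝ) = Real.sqrt 1 by simp]
    apply Real.sqrt_le_sqrt
    nlinarith [Real.pi_gt_three]
  calc (Real.sqrt (2 * Real.pi * (1:NNReal)))⁻¹ * Real.exp (-(x - d) ^ 2 / (2 * (1:NNReal)))
      ≤ 1 * 1 := by
        apply mul_le_mul h2 h1 (Real.exp_nonneg _) zero_le_one
    _ = 1 := by ring

lemma gauss_le_volume (d : ℝ) (s : Set ℝ) : gaussianReal d 1 s ≤ volume s := by
  rw [gaussianReal_apply d one_ne_zero s]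
  calc ∫⁻ x in s, gaussianPDF d 1 x ≤ ∫⁻ _ in s, 1 := by
        apply lintegral_mono
        exact fun x => gaussianPDF_le_one d x
    _ = volume s := by simp

lemma stdPhi_sub (a b : ℝ) (hab : a ≤ b) :
    stdPhi b - stdPhi a = ((gaussianReal 0 1) (Set.Ioc a b)).toReal := by
  have h : Set.Iic a ∪ Set.Ioc a b = Set.Iic b := Set.Iic_union_Ioc_eq_Iic hab
  have hd : Disjoint (Set.Iic a) (Set.Ioc a b) := by
    rw [Set.disjoint_left]; intro x hx hx2; exact absurd hx2.1 (not_lt.2 hx)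
  have := measure_union (μ := gaussianReal 0 1) hd measurableSet_Ioc
  rw [h] at this
  rw [stdPhi, stdPhi, this, ENNReal.toReal_add (gauss_ne_top _ _) (gauss_ne_top _ _)]
  ring

lemma stdPhi_mono : Monotone stdPhi := by
  intro a b hab
  have := stdPhi_sub a b hab
  have h2 : (0:ℝ) ≤ ((gaussianReal 0 1) (Set.Ioc a b)).toReal := ENNReal.toReal_nonneg
  linarith

lemma stdPhi_strictMono : StrictMono stdPhi := by
  intro a b hab
  have key : 0 < (gaussianReal 0 1) (Set.Ioc a b) := by
    rw [gaussianReal_apply 0 one_ne_zero]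
    rw [lintegral_pos_iff_support (measurable_gaussianPDF 0 1)]
    have hsupp : Function.support (gaussianPDF 0 1) = Set.univ := by
      ext x; simp [Function.mem_support, (gaussianPDF_pos 0 one_ne_zero x).ne']
    rw [Measure.restrict_apply (by rw [hsupp]; exact MeasurableSet.univ), hsupp, Set.univ_inter]
    rw [Real.volume_Ioc]
    simp [hab]
  have := stdPhi_sub a b hab.le
  have h2 : 0 < ((gaussianReal 0 1) (Set.Ioc a b)).toReal :=
    ENNReal.toReal_pos key.ne' (gauss_ne_top _ _)
  linarith

lemma stdPhi_continuous : Continuous stdPhi := by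
  have : LipschitzWith 1 stdPhi := by
    rw [lipschitzWith_iff_dist_le_mul]
    intro a b
    rcases le_total a b with h | h
    · rw [Real.dist_eq, Real.dist_eq, abs_of_nonpos (by linarith [stdPhi_mono h]),
        abs_of_nonpos (by linarith)]
      have := stdPhi_sub a b h
      have hle : (gaussianReal 0 1) (Set.Ioc a b) ≤ ENNReal.ofReal (b - a) := by
        calc (gaussianReal 0 1) (Set.Ioc a b) ≤ volume (Set.Ioc a b) := gauss_le_volume _ _
          _ = ENNReal.ofReal (b - a) := Real.volume_Ioc
      have := ENNReal.toReal_le_of_le_ofReal (by linarith) hle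
      push_cast; linarith
    · rw [Real.dist_eq, Real.dist_eq, abs_of_nonneg (by linarith [stdPhi_mono h]),
        abs_of_nonneg (by linarith)]
      have := stdPhi_sub b a h
      have hle : (gaussianReal 0 1) (Set.Ioc b a) ≤ ENNReal.ofReal (a - b) := by
        calc (gaussianReal 0 1) (Set.Ioc b a) ≤ volume (Set.Ioc b a) := gauss_le_volume _ _
          _ = ENNReal.ofReal (a - b) := Real.volume_Ioc
      have := ENNReal.toReal_le_of_le_ofReal (by linarith) hle
      push_cast; linarith
  exact this.continuous

lemma stdPhi_surj {p : ℝ} (h0 : 0 < p) (h1 : p < 1) : ∃ x, stdPhi x = p := by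
  have hbot : Tendsto stdPhi atBot (nhds 0) := by
    have := tendsto_cdf_atBot (gaussianReal 0 1)
    exact this.congr fun x => (stdPhi_eq_cdf x).symm
  have htop : Tendsto stdPhi atTop (nhds 1) := by
    have := tendsto_cdf_atTop (gaussianReal 0 1)
    exact this.congr fun x => (stdPhi_eq_cdf x).symm
  have h2 : ∀ᶠ x in atBot, stdPhi x < p := hbot.eventually_lt_const h0
  have h3 : ∀ᶠ x in atTop, p < stdPhi x := htop.eventually_const_lt h1
  obtain ⟨a, ha⟩ := h2.exists
  obtain ⟨b, hb⟩ := h3.exists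
  have hab : a ≤ b := by
    by_contra hc
    push_neg at hc
    have := stdPhi_mono hc.le
    linarith
  have := intermediate_value_Icc hab stdPhi_continuous.continuousOn
  obtain ⟨x, _, hx⟩ := this ⟨ha.le, hb.le⟩
  exact ⟨x, hx⟩


lemma gauss_map_neg : (gaussianReal 0 1).map (fun x => -x) = gaussianReal 0 1 := by
  have h := gaussianReal_map_const_mul (μ := 0) (v := 1) (-1)
  have h2 : (fun x : ℝ => -x) = ((-1 : ℝ) * ·) := by funext x; ring
  rw [h2, h]
  congr 1
  · ring
  · ext
    push_cast
    norm_num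

lemma gauss_neg_apply (s : Set ℝ) (hs : MeasurableSet s) :
    (gaussianReal 0 1) ((fun x : ℝ => -x) ⁻¹' s) = gaussianReal 0 1 s := by
  conv_rhs => rw [← gauss_map_neg]
  rw [Measure.map_apply measurable_neg hs]

lemma stdPhi_zero : stdPhi 0 = 1 / 2 := by
  have h1 : (gaussianReal 0 1) (Set.Iic (0:ℝ)) = (gaussianReal 0 1) (Set.Ici (0:ℝ)) := by
    have : (fun x : ℝ => -x) ⁻¹' (Set.Iic (0:ℝ)) = Set.Ici 0 := by
      ext x; simp
    rw [← gauss_neg_apply (Set.Iic 0) measurableSet_Iic, this]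
  have h2 : (gaussianReal 0 1) (Set.Iic (0:ℝ)) + (gaussianReal 0 1) (Set.Ici (0:ℝ))
      = 1 + (gaussianReal 0 1) ({(0:ℝ)}) := by
    have hu : Set.Iic (0:ℝ) ∪ Set.Ici (0:ℝ) = Set.univ := Set.Iic_union_Ici
    have hi : Set.Iic (0:ℝ) ∩ Set.Ici (0:ℝ) = {0} := by ext x; simp [le_antisymm_iff, And.comm]
    have := measure_union_add_inter (μ := gaussianReal 0 1) (s := Set.Iic 0) (t := Set.Ici 0)
      measurableSet_Ici
    rw [hu, hi, measure_univ] at this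
    exact this.symm
  have h3 : (gaussianReal 0 1) ({(0:ℝ)}) = 0 := measure_singleton 0
  rw [h3, add_zero] at h2
  rw [h1] at h2
  rw [stdPhi, h1]
  have h4 : (gaussianReal 0 1) (Set.Ici (0:ℝ)) ≠ ⊤ := measure_ne_top _ _
  have h5 := ENNReal.toReal_add h4 h4
  rw [h2] at h5
  simp at h5
  linarith

lemma stdPhi_invFun {p : ℝ} (h0 : 0 < p) (h1 : p < 1) : stdPhi (stdPhiInv p) = p :=
  Function.invFun_eq (stdPhi_surj h0 h1)

lemma stdPhiInv_phi (x : ℝ) : stdPhiInv (stdPhi x) = x :=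
  Function.leftInverse_invFun stdPhi_strictMono.injective x


lemma cseq_phi {n k : ℕ} (hk : k < n) : stdPhi (cseq n k) = (1 + (k : ℝ) / n) / 2 := by
  have hn : (0:ℝ) < n := Nat.cast_pos.mpr (by omega)
  have h1 : (0:ℝ) ≤ (k:ℝ) / n := by positivity
  have h2 : (k:ℝ) / n < 1 := by
    rw [div_lt_one hn]; exact_mod_cast hk
  exact stdPhi_invFun (by linarith) (by linarith)

lemma cseq_zero (n : ℕ) : cseq n 0 = 0 := by
  rw [cseq]
  norm_num
  rw [← stdPhi_zero, stdPhiInv_phi]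

lemma cseq_strictMono {n k l : ℕ} (hkl : k < l) (hl : l < n) : cseq n k < cseq n l := by
  apply stdPhi_strictMono.lt_iff_lt.mp
  rw [cseq_phi (lt_trans hkl hl), cseq_phi hl]
  have hn : (0:ℝ) < n := Nat.cast_pos.mpr (by omega)
  have hkl' : (k:ℝ) < l := by exact_mod_cast hkl
  have h3 : (k:ℝ)/n < (l:ℝ)/n := by gcongr
  linarith

lemma cseq_mono {n k l : ℕ} (hkl : k ≤ l) (hl : l < n) : cseq n k ≤ cseq n l := by
  rcases eq_or_lt_of_le hkl with h | h
  · rw [h]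
  · exact (cseq_strictMono h hl).le

lemma cseq_nonneg {n k : ℕ} (hk : k < n) : 0 ≤ cseq n k := by
  rw [← cseq_zero n]
  exact cseq_mono (Nat.zero_le k) hk

lemma cband_subset_Ioi {n k : ℕ} (hk1 : 1 ≤ k) (hk2 : k ≤ n) :
    cband n k ⊆ Set.Ioi (cseq n (k - 1)) := by
  rw [cband]
  split
  · next h => rw [h]
  · exact Set.Ioo_subset_Ioi_self

lemma cband_subset_Iic {n k : ℕ} (hk : k < n) : cband n k ⊆ Set.Iic (cseq n k) := by
  rw [cband, if_neg hk.ne]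
  exact fun x hx => hx.2.le

lemma cband_disjoint {n k l : ℕ} (hk1 : 1 ≤ k) (hkl : k < l) (hl : l ≤ n) :
    Disjoint (cband n k) (cband n l) := by
  have h1 : cband n k ⊆ Set.Iic (cseq n k) := cband_subset_Iic (lt_of_lt_of_le hkl hl)
  have h2 : cband n l ⊆ Set.Ioi (cseq n (l - 1)) := cband_subset_Ioi (le_trans hk1 hkl.le) hl
  have h3 : cseq n k ≤ cseq n (l - 1) := by
    apply cseq_mono (by omega) (by omega)
  rw [Set.disjoint_left]
  intro x hx hx2
  have := h1 hx
  have := h2 hx2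
  simp only [Set.mem_Iic, Set.mem_Ioi] at *
  linarith

lemma cband_pos {n k : ℕ} (hn : 0 < n) (hk1 : 1 ≤ k) (hk2 : k ≤ n) :
    cband n k ⊆ Set.Ioi (0:ℝ) := by
  intro x hx
  have h1 := cband_subset_Ioi hk1 hk2 hx
  have h2 : (0:ℝ) ≤ cseq n (k - 1) := cseq_nonneg (by omega)
  simp only [Set.mem_Ioi] at *
  linarith

lemma cband_cover {n : ℕ} (hn : 0 < n) {t : ℝ} (ht : 0 < t)
    (hne : ∀ m < n, t ≠ cseq n m) : ∃ i : Fin n, t ∈ cband n (i.1 + 1) := by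
  set P : ℕ → Prop := fun m => cseq n m < t with hP
  have hP0 : P 0 := by rw [hP]; simpa [cseq_zero]
  set m := Nat.findGreatest P (n - 1) with hm
  have hmspec : P m := Nat.findGreatest_spec (Nat.zero_le _) hP0
  have hmle : m ≤ n - 1 := Nat.findGreatest_le (n - 1)
  rcases eq_or_lt_of_le hmle with heq | hlt
  · -- m = n - 1 : t in top band
    refine ⟨⟨n - 1, by omega⟩, ?_⟩
    have : (n - 1) + 1 = n := by omega
    rw [this, cband, if_pos rfl]
    rw [heq] at hmspec
    exact hmspec
  · -- m < n - 1
    refine ⟨⟨m, by omega⟩, ?_⟩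
    show t ∈ cband n (m + 1)
    have hnot : ¬ P (m + 1) := Nat.findGreatest_is_greatest (n := n - 1) (k := m + 1) (by omega) (by omega)
    have hle : t ≤ cseq n (m + 1) := not_lt.mp (by simpa [hP] using hnot)
    have hne' : t ≠ cseq n (m + 1) := hne (m + 1) (by omega)
    have hlt2 : t < cseq n (m + 1) := lt_of_le_of_ne hle hne'
    rw [cband, if_neg (by omega)]
    constructor
    · simpa using hmspec
    · exact hlt2


lemma gauss_ne_top' (d : ℝ) (s : Set ℝ) : gaussianReal d 1 s ≠ ⊤ := measure_ne_top _ _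

lemma cband_measurable (n k : ℕ) : MeasurableSet (cband n k) := by
  rw [cband]; split
  · exact measurableSet_Ioi
  · exact measurableSet_Ioo

lemma absSet_measurable (n k : ℕ) : MeasurableSet {x : ℝ | |x| ∈ cband n k} :=
  (cband_measurable n k).preimage (continuous_abs.measurable)

lemma abs_pre_Ioo {a b : ℝ} (ha : 0 ≤ a) :
    {x : ℝ | |x| ∈ Set.Ioo a b} = Set.Ioo a b ∪ Set.Ioo (-b) (-a) := by
  ext x
  simp only [Set.mem_setOf_eq, Set.mem_Ioo, Set.mem_union]
  rcases le_or_gt 0 x with h | h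
  · rw [abs_of_nonneg h]
    constructor
    · intro hx; exact Or.inl hx
    · rintro (hx | hx)
      · exact hx
      · exfalso; linarith [hx.2]
  · rw [abs_of_neg h]
    constructor
    · intro hx; right; constructor <;> linarith [hx.1, hx.2]
    · rintro (hx | hx)
      · exfalso; linarith [hx.1]
      · constructor <;> linarith [hx.1, hx.2]

lemma abs_pre_Ioi {a : ℝ} (ha : 0 ≤ a) :
    {x : ℝ | |x| ∈ Set.Ioi a} = Set.Ioi a ∪ Set.Iio (-a) := by
  ext x
  simp only [Set.mem_setOf_eq, Set.mem_Ioi, Set.mem_union, Set.mem_Iio]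
  rcases le_or_gt 0 x with h | h
  · rw [abs_of_nonneg h]
    constructor
    · exact Or.inl
    · rintro (hx | hx)
      · exact hx
      · exfalso; linarith
  · rw [abs_of_neg h]
    constructor
    · intro hx; right; linarith
    · rintro (hx | hx) <;> linarith

lemma gauss_Ioo_toReal {a b : ℝ} (hab : a ≤ b) :
    ((gaussianReal 0 1) (Set.Ioo a b)).toReal = stdPhi b - stdPhi a := by
  rw [measure_congr (Ioo_ae_eq_Ioc (μ := gaussianReal 0 1)), ← stdPhi_sub a b hab]

lemma gauss_Ioi_toReal (a : ℝ) :
    ((gaussianReal 0 1) (Set.Ioi a)).toReal = 1 - stdPhi a := by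
  have h := measure_add_measure_compl (μ := gaussianReal 0 1) (measurableSet_Iic (a := a))
  rw [Set.compl_Iic, measure_univ] at h
  have := ENNReal.toReal_add (gauss_ne_top' 0 (Set.Iic a)) (gauss_ne_top' 0 (Set.Ioi a))
  rw [h] at this
  simp only [ENNReal.toReal_one] at this
  rw [stdPhi]
  linarith

lemma gauss_neg_toReal (s : Set ℝ) (hs : MeasurableSet s) :
    ((gaussianReal 0 1) ((fun x : ℝ => -x) ⁻¹' s)).toReal = ((gaussianReal 0 1) s).toReal := by
  rw [gauss_neg_apply s hs]

/-- standard band probability is 1/n -/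
lemma std_band {n k : ℕ} (hk1 : 1 ≤ k) (hk2 : k ≤ n) :
    ((gaussianReal 0 1) {x : ℝ | |x| ∈ cband n k}).toReal = 1 / (n:ℝ) := by
  have hn : 0 < n := by omega
  have hnR : (0:ℝ) < n := Nat.cast_pos.mpr hn
  rcases eq_or_lt_of_le hk2 with heq | hlt
  · -- top band
    subst heq
    rw [cband, if_pos rfl]
    set c := cseq k (k - 1) with hc
    have hc0 : 0 ≤ c := cseq_nonneg (by omega)
    rw [abs_pre_Ioi hc0]
    have hdisj : Disjoint (Set.Ioi c) (Set.Iio (-c)) := by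
      rw [Set.disjoint_left]; intro x hx hx2
      simp only [Set.mem_Ioi, Set.mem_Iio] at *
      linarith
    rw [measure_union hdisj measurableSet_Iio]
    have hneg : Set.Iio (-c) = (fun x : ℝ => -x) ⁻¹' (Set.Ioi c) := by
      ext x; simp
    rw [hneg, gauss_neg_apply _ measurableSet_Ioi]
    rw [ENNReal.toReal_add (gauss_ne_top' _ _) (gauss_ne_top' _ _), gauss_Ioi_toReal]
    rw [cseq_phi (by omega)]
    have : ((k - 1 : ℕ) : ℝ) = (k:ℝ) - 1 := by
      push_cast [Nat.cast_sub hk1]; ring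
    rw [this]
    field_simp
    ring
  · -- middle band
    rw [cband, if_neg (by omega)]
    set a := cseq n (k - 1) with ha
    set b := cseq n k with hb
    have ha0 : 0 ≤ a := cseq_nonneg (by omega)
    have hab : a ≤ b := cseq_mono (by omega) hlt
    rw [abs_pre_Ioo ha0]
    have hdisj : Disjoint (Set.Ioo a b) (Set.Ioo (-b) (-a)) := by
      rw [Set.disjoint_left]; intro x hx hx2
      simp only [Set.mem_Ioo] at *
      linarith [hx.1, hx2.2]
    rw [measure_union hdisj measurableSet_Ioo]
    have hneg : Set.Ioo (-b) (-a) = (fun x : ℝ => -x) ⁻¹' (Set.Ioo a b) := by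
      ext x; simp only [Set.mem_Ioo, Set.mem_preimage]; constructor <;> intro h <;>
        constructor <;> linarith [h.1, h.2]
    rw [hneg, gauss_neg_apply _ measurableSet_Ioo]
    rw [ENNReal.toReal_add (gauss_ne_top' _ _) (gauss_ne_top' _ _), gauss_Ioo_toReal hab]
    rw [cseq_phi hlt, cseq_phi (by omega)]
    have : ((k - 1 : ℕ) : ℝ) = (k:ℝ) - 1 := by
      push_cast [Nat.cast_sub hk1]; ring
    rw [this]
    field_simp
    ring


lemma absSet_disjoint {n : ℕ} {i j : Fin n} (hij : i ≠ j) :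
    Disjoint {x : ℝ | |x| ∈ cband n (i.1 + 1)} {x : ℝ | |x| ∈ cband n (j.1 + 1)} := by
  have key : Disjoint (cband n (i.1 + 1)) (cband n (j.1 + 1)) := by
    rcases lt_or_gt_of_ne (fun h => hij (Fin.ext h)) with h | h
    · exact cband_disjoint (by omega) (by omega) (by omega)
    · exact (cband_disjoint (by omega) (by omega) (by omega)).symm
  rw [Set.disjoint_left] at key ⊢
  exact fun x hx hx2 => key hx hx2

lemma gauss_union_bands (d : ℝ) {n : ℕ} (hn : 0 < n) :
    (gaussianReal d 1) (⋃ i : Fin n, {x : ℝ | |x| ∈ cband n (i.1 + 1)}) = 1 := by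
  set U := ⋃ i : Fin n, {x : ℝ | |x| ∈ cband n (i.1 + 1)} with hU
  have hUm : MeasurableSet U := MeasurableSet.iUnion fun i => absSet_measurable n (i.1 + 1)
  rw [← prob_compl_eq_zero_iff hUm]
  set N : Set ℝ := {0} ∪ ⋃ m ∈ Finset.range n, ({cseq n m} ∪ {-(cseq n m)}) with hN
  have hsub : Uᶜ ⊆ N := by
    intro x hx
    simp only [hU, Set.mem_compl_iff, Set.mem_iUnion, not_exists, Set.mem_setOf_eq] at hx
    rcases eq_or_ne x 0 with h0 | h0
    · left; simp [h0]
    · have habs : 0 < |x| := abs_pos.mpr h0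
      by_cases hcs : ∀ m < n, |x| ≠ cseq n m
      · obtain ⟨i, hi⟩ := cband_cover hn habs hcs
        exact absurd hi (hx i)
      · push_neg at hcs
        obtain ⟨m, hm, hmx⟩ := hcs
        right
        simp only [Set.mem_iUnion, Finset.mem_range, Set.mem_union, Set.mem_singleton_iff]
        refine ⟨m, hm, ?_⟩
        rcases abs_eq (le_of_lt (hmx ▸ habs)) |>.mp hmx with h | h
        · left; exact h
        · right; linarith
  have hNnull : (gaussianReal d 1) N = 0 := by
    have hcount : N.Countable := by
      apply Set.Countable.union (Set.countable_singleton 0)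
      exact Set.Countable.biUnion (Set.to_countable _)
        (fun m _ => (Set.countable_singleton _).union (Set.countable_singleton _))
    exact hcount.measure_zero _
  exact measure_mono_null hsub hNnull

lemma gauss_sum_bands (d : ℝ) {n : ℕ} (hn : 0 < n) :
    ∑ i : Fin n, (gaussianReal d 1) {x : ℝ | |x| ∈ cband n (i.1 + 1)} = 1 := by
  rw [← tsum_fintype (L := .unconditional _), ← measure_iUnion (fun i j hij => absSet_disjoint hij)
    (fun i => absSet_measurable n (i.1 + 1))]
  exact gauss_union_bands d hn


/-- The Latin-square test is a similar test of H₀ : δ₁δ₂δ₃ = 0 at level α = 1/n: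
for every (δ₁, δ₂, δ₃) with δ₁δ₂δ₃ = 0, P((|Z₁|, |Z₂|, |Z₃|) ∈ R†) = α. -/
theorem stmt16 (n : ℕ) (hn : 0 < n) (A : Fin n → Fin n → Fin n)
    (hA : IsLatinSquare A) (d1 d2 d3 : ℝ) (hnull : d1 * d2 * d3 = 0) :
    ((gauss3 d1 d2 d3)
        {z : ℝ × ℝ × ℝ | (|z.1|, |z.2.1|, |z.2.2|) ∈ Rdag n A}).toReal = 1 / (n : ℝ) := by
  classical
  set S : ℕ → Set ℝ := fun k => {x : ℝ | |x| ∈ cband n k} with hS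
  -- event decomposition
  have hevent : {z : ℝ × ℝ × ℝ | (|z.1|, |z.2.1|, |z.2.2|) ∈ Rdag n A}
      = ⋃ p : Fin n × Fin n,
          (S (p.1.1 + 1)) ×ˢ (S (p.2.1 + 1)) ×ˢ (S ((A p.1 p.2).1 + 1)) := by
    ext z
    simp only [Set.mem_setOf_eq, Rdag, Set.mem_iUnion, Set.mem_prod, hS]
    constructor
    · rintro ⟨i, j, h1, h2, h3⟩; exact ⟨(i, j), h1, h2, h3⟩
    · rintro ⟨⟨i, j⟩, h1, h2, h3⟩; exact ⟨i, j, h1, h2, h3⟩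
  rw [hevent]
  -- measure of the union
  have hmeas : ∀ p : Fin n × Fin n,
      MeasurableSet ((S (p.1.1 + 1)) ×ˢ (S (p.2.1 + 1)) ×ˢ (S ((A p.1 p.2).1 + 1))) :=
    fun p => (absSet_measurable n _).prod ((absSet_measurable n _).prod (absSet_measurable n _))
  have hdisj : Pairwise fun p q : Fin n × Fin n =>
      Disjoint ((S (p.1.1 + 1)) ×ˢ (S (p.2.1 + 1)) ×ˢ (S ((A p.1 p.2).1 + 1)))
        ((S (q.1.1 + 1)) ×ˢ (S (q.2.1 + 1)) ×ˢ (S ((A q.1 q.2).1 + 1))) := by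
    intro p q hpq
    rw [Set.disjoint_left]
    rintro ⟨z1, z2, z3⟩ ⟨h1, h2, h3⟩ ⟨g1, g2, g3⟩
    by_cases hij : p.1 = q.1
    · have hj : p.2 ≠ q.2 := fun h => hpq (Prod.ext_iff.mpr ⟨hij, h⟩)
      exact (Set.disjoint_left.mp (absSet_disjoint hj)) h2 g2
    · exact (Set.disjoint_left.mp (absSet_disjoint hij)) h1 g1
  rw [measure_iUnion hdisj hmeas]
  have hprod : ∀ p : Fin n × Fin n,
      (gauss3 d1 d2 d3) ((S (p.1.1 + 1)) ×ˢ (S (p.2.1 + 1)) ×ˢ (S ((A p.1 p.2).1 + 1)))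
      = (gaussianReal d1 1) (S (p.1.1 + 1)) * ((gaussianReal d2 1) (S (p.2.1 + 1))
          * (gaussianReal d3 1) (S ((A p.1 p.2).1 + 1))) := by
    intro p
    rw [gauss3, Measure.prod_prod, Measure.prod_prod]
  rw [tsum_fintype]
  simp_rw [hprod]
  rw [ENNReal.toReal_sum (fun p _ => by
    exact ENNReal.mul_ne_top (measure_ne_top _ _) (ENNReal.mul_ne_top (measure_ne_top _ _)
      (measure_ne_top _ _)))]
  simp_rw [ENNReal.toReal_mul]
  -- now real arithmetic
  set p : Fin n → ℝ := fun i => ((gaussianReal d1 1) (S (i.1 + 1))).toReal with hp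
  set q : Fin n → ℝ := fun j => ((gaussianReal d2 1) (S (j.1 + 1))).toReal with hq
  set r : Fin n → ℝ := fun k => ((gaussianReal d3 1) (S (k.1 + 1))).toReal with hr
  have hsum : ∀ d : ℝ, ∑ i : Fin n, ((gaussianReal d 1) (S (i.1 + 1))).toReal = 1 := by
    intro d
    rw [← ENNReal.toReal_sum (fun i _ => measure_ne_top _ _), gauss_sum_bands d hn,
      ENNReal.toReal_one]
  have hsump : ∑ i, p i = 1 := hsum d1
  have hsumq : ∑ j, q j = 1 := hsum d2
  have hsumr : ∑ k, r k = 1 := hsum d3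
  have goal_eq : ∑ x : Fin n × Fin n, p x.1 * (q x.2 * r (A x.1 x.2))
      = ∑ i : Fin n, ∑ j : Fin n, p i * (q j * r (A i j)) := by
    rw [← Finset.sum_product']
    rfl
  rw [goal_eq]
  have hstd : ∀ i : Fin n, ((gaussianReal 0 1) (S (i.1 + 1))).toReal = 1 / (n:ℝ) :=
    fun i => std_band (by omega) (by omega)
  rcases mul_eq_zero.mp hnull with h12 | h3
  · rcases mul_eq_zero.mp h12 with h1 | h2
    · -- d1 = 0
      have hp1 : ∀ i, p i = 1 / (n:ℝ) := by
        intro i; rw [hp]; simp only [h1]; exact hstd i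
      rw [Finset.sum_comm]
      have : ∀ j : Fin n, ∑ i : Fin n, p i * (q j * r (A i j)) = (1/(n:ℝ)) * q j := by
        intro j
        simp_rw [hp1]
        have hbij : ∑ i : Fin n, r (A i j) = 1 := by
          rw [Fintype.sum_bijective (fun i => A i j) (hA.2 j) _ r (fun i => rfl)]
          exact hsumr
        rw [← Finset.mul_sum, ← Finset.mul_sum, hbij, mul_one]
      simp_rw [this]
      rw [← Finset.mul_sum, hsumq, mul_one]
    · -- d2 = 0
      have hq1 : ∀ j, q j = 1 / (n:ℝ) := by
        intro j; rw [hq]; simp only [h2]; exact hstd j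
      have : ∀ i : Fin n, ∑ j : Fin n, p i * (q j * r (A i j)) = p i * (1/(n:ℝ)) := by
        intro i
        simp_rw [hq1]
        have hbij : ∑ j : Fin n, r (A i j) = 1 := by
          rw [Fintype.sum_bijective (A i) (hA.1 i) _ r (fun j => rfl)]
          exact hsumr
        have : ∀ j : Fin n, p i * (1/(n:ℝ) * r (A i j)) = p i * (1/(n:ℝ)) * r (A i j) := by
          intro j; ring
        simp_rw [this]
        rw [← Finset.mul_sum, hbij, mul_one]
      simp_rw [this]
      rw [← Finset.sum_mul, hsump, one_mul]
  · -- d3 = 0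
    have hr1 : ∀ k, r k = 1 / (n:ℝ) := by
      intro k; rw [hr]; simp only [h3]; exact hstd k
    have : ∀ i : Fin n, ∑ j : Fin n, p i * (q j * r (A i j)) = p i * (1/(n:ℝ)) := by
      intro i
      simp_rw [hr1]
      rw [← Finset.mul_sum]
      congr 1
      rw [← Finset.sum_mul, hsumq, one_mul]
    simp_rw [this]
    rw [← Finset.sum_mul, hsump, one_mul]
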